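/- arXiv:1805.01418 — 2 statements merged into one kernel-verified Lean document; each statement's English description precedes it below -/
import Mathlib

section
/- Let M be an n×n real symmetric negative definite matrix all of whose off-diagonal entries are nonnegative (M_{ij} ≥ 0 for all i ≠ j). Then M is invertible and every entry of the inverse matrix M⁻¹ is nonpositive. -/
/-!
Let `x` be the `j`-th column of `M⁻¹`, so that `M x = eⱼ ≥ 0`, and split `x = x⁺ - x⁻`.
Then `x⁺ᵀ M x⁺ = x⁺ᵀ eⱼ + x⁺ᵀ M x⁻`. The first term is nonnegative, and so is the second:
its diagonal terms vanish because `x⁺` and `x⁻` have disjoint supports, and its off-diagonal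
terms are products of nonnegative numbers. Negative definiteness then forces `x⁺ = 0`.
-/

open Matrix

variable {ι R : Type*}

theorem Matrix.isUnit_of_dotProduct_mulVec_ne_zero [Fintype ι] [DecidableEq ι] [Field R]
    {M : Matrix ι ι R} (hM : ∀ x : ι → R, x ≠ 0 → x ⬝ᵥ M *ᵥ x ≠ 0) : IsUnit M := by
  rw [isUnit_iff_isUnit_det, isUnit_iff_ne_zero]
  intro hdet
  obtain ⟨x, hx, hMx⟩ := exists_mulVec_eq_zero_iff.mpr hdet
  exact hM x hx (by rw [hMx, dotProduct_zero])

section OrderedRing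

variable [CommRing R] [LinearOrder R] [IsStrictOrderedRing R]

theorem Pi.posPart_mul_negPart (x : ι → R) : x⁺ * x⁻ = 0 := by
  ext k
  rcases le_total (x k) 0 with h | h
  · simp [posPart_eq_zero.mpr h]
  · simp [negPart_eq_zero.mpr h]

variable [Fintype ι] {M : Matrix ι ι R}

theorem Matrix.dotProduct_mulVec_nonneg_of_mul_eq_zero (hoff : ∀ i j, i ≠ j → 0 ≤ M i j)
    {u v : ι → R} (hu : 0 ≤ u) (hv : 0 ≤ v) (huv : u * v = 0) : 0 ≤ u ⬝ᵥ M *ᵥ v := by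
  simp only [dotProduct, mulVec, Finset.mul_sum]
  refine Finset.sum_nonneg fun i _ ↦ Finset.sum_nonneg fun j _ ↦ ?_
  rcases eq_or_ne i j with rfl | hij
  · rw [mul_left_comm, show u i * v i = 0 from congrFun huv i, mul_zero]
  · exact mul_nonneg (hu i) (mul_nonneg (hoff i j hij) (hv j))

theorem Matrix.nonpos_of_mulVec_nonneg (hneg : ∀ x : ι → R, x ≠ 0 → x ⬝ᵥ M *ᵥ x < 0)
    (hoff : ∀ i j, i ≠ j → 0 ≤ M i j) {x : ι → R} (hMx : 0 ≤ M *ᵥ x) : x ≤ 0 := by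
  rw [← posPart_eq_zero]
  by_contra hpos
  have hsplit : x⁺ ⬝ᵥ M *ᵥ x⁺ = x⁺ ⬝ᵥ M *ᵥ x + x⁺ ⬝ᵥ M *ᵥ x⁻ := by
    rw [← dotProduct_add, ← mulVec_add, ← eq_add_of_sub_eq (posPart_sub_negPart x)]
  have hcol : 0 ≤ x⁺ ⬝ᵥ M *ᵥ x := dotProduct_nonneg_of_nonneg (posPart_nonneg x) hMx
  have hcross : 0 ≤ x⁺ ⬝ᵥ M *ᵥ x⁻ :=
    dotProduct_mulVec_nonneg_of_mul_eq_zero hoff (posPart_nonneg x) (negPart_nonneg x)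
      (Pi.posPart_mul_negPart x)
  linarith [hneg x⁺ hpos]

end OrderedRing

theorem inv_entries_nonpos_of_negdef_offdiag_nonneg_general
    {n : ℕ} (M : Matrix (Fin n) (Fin n) ℝ)
    (hneg : ∀ x : Fin n → ℝ, x ≠ 0 → dotProduct x (M.mulVec x) < 0)
    (hoff : ∀ i j : Fin n, i ≠ j → 0 ≤ M i j) :
    IsUnit M ∧ ∀ i j : Fin n, M⁻¹ i j ≤ 0 := by
  have hM : IsUnit M := isUnit_of_dotProduct_mulVec_ne_zero fun x hx ↦ (hneg x hx).ne
  refine ⟨hM, fun i j ↦ ?_⟩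
  have hcol : M *ᵥ (M⁻¹ *ᵥ Pi.single j 1) = Pi.single j 1 := by
    rw [mulVec_mulVec, mul_nonsing_inv M ((isUnit_iff_isUnit_det M).mp hM), one_mulVec]
  have hx : M⁻¹ *ᵥ Pi.single j 1 ≤ 0 :=
    nonpos_of_mulVec_nonneg hneg hoff (hcol.symm ▸ Pi.single_nonneg.mpr zero_le_one)
  simpa [mulVec_single_one] using hx i

/-- Let `M` be an `n × n` real symmetric negative definite matrix all of whose
off-diagonal entries are nonnegative.  Then `M` is invertible and every entry of
the inverse matrix `M⁻¹` is nonpositive. -/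
theorem inv_entries_nonpos_of_negdef_offdiag_nonneg
    {n : ℕ} (M : Matrix (Fin n) (Fin n) ℝ)
    (hsymm : M.IsSymm)
    (hneg : ∀ x : Fin n → ℝ, x ≠ 0 → dotProduct x (M.mulVec x) < 0)
    (hoff : ∀ i j : Fin n, i ≠ j → 0 ≤ M i j) :
    IsUnit M ∧ ∀ i j : Fin n, M⁻¹ i j ≤ 0 :=
  inv_entries_nonpos_of_negdef_offdiag_nonneg_general M hneg hoff
end

section
/- Let M be an n×n real symmetric negative definite matrix all of whose off-diagonal entries are nonnegative (M_{ij} ≥ 0 for all i ≠ j), and assume M is irreducible, i.e. for every pair of indices i ≠ j there exists a chain of indices i = k₀, k₁, …, k_m = j with M_{k_l k_{l+1}} ≠ 0 for every 0 ≤ l < m. Then every entry of the inverse matrix M⁻¹ is strictly negative. -/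
/-! A column `x` of `M⁻¹` satisfies `M x = eⱼ ≥ 0`. Write `x = x⁺ - x⁻`: since the off-diagonal
entries of `M` are nonnegative and `x⁺, x⁻` have disjoint supports, `x⁺ ⬝ M x⁻ ≥ 0`, so
`x⁺ ⬝ M x⁺ = x⁺ ⬝ M x + x⁺ ⬝ M x⁻ ≥ 0` and negative definiteness forces `x ≤ 0`.
If `x i = 0`, then `(M x) i = ∑ₖ M i k x k` is a sum of nonpositive terms that is `≥ 0`, so
`x k = 0` whenever `M i k ≠ 0`. Following a chain from `i` to `j` gives `x j = 0`, hence
`(M x) j ≤ 0`, contradicting `(M x) j = 1`. -/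

open Matrix

theorem Fin.last_of_chain {α : Type*} {r : α → α → Prop} {P : α → Prop}
    (hP : ∀ a b, r a b → P a → P b) {m : ℕ} (k : Fin (m + 1) → α)
    (hk : ∀ l : Fin m, r (k l.castSucc) (k l.succ)) (h0 : P (k 0)) :
    P (k (Fin.last m)) := by
  suffices ∀ l, P (k l) from this _
  intro l
  induction l using Fin.induction with
  | zero => exact h0
  | succ l ih => exact hP _ _ (hk l) ih

theorem Real.posPart_mul_negPart (a : ℝ) : a⁺ * a⁻ = 0 := by
  rcases le_total a 0 with h | h
  · rw [posPart_eq_zero.2 h, zero_mul]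
  · rw [negPart_eq_zero.2 h, mul_zero]

namespace Matrix

variable {ι : Type*} {M : Matrix ι ι ℝ} {x : ι → ℝ}

theorem mul_apply_nonpos_of_apply_eq_zero (hoff : ∀ i j, i ≠ j → 0 ≤ M i j) (hx : x ≤ 0)
    {i : ι} (hi : x i = 0) (k : ι) : M i k * x k ≤ 0 := by
  rcases eq_or_ne i k with rfl | hik
  · rw [hi, mul_zero]
  · exact mul_nonpos_of_nonneg_of_nonpos (hoff i k hik) (hx k)

variable [Fintype ι]

theorem det_ne_zero_of_dotProduct_mulVec_neg [DecidableEq ι]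
    (hneg : ∀ x : ι → ℝ, x ≠ 0 → x ⬝ᵥ M *ᵥ x < 0) : M.det ≠ 0 := fun h => by
  obtain ⟨v, hv, hMv⟩ := exists_mulVec_eq_zero_iff.2 h
  simpa [hMv] using hneg v hv

theorem dotProduct_mulVec_nonneg_of_offDiag_nonneg (hoff : ∀ i j, i ≠ j → 0 ≤ M i j)
    {y z : ι → ℝ} (hy : 0 ≤ y) (hz : 0 ≤ z) (hyz : ∀ i, y i * z i = 0) :
    0 ≤ y ⬝ᵥ M *ᵥ z := by
  simp only [dotProduct, mulVec, Finset.mul_sum]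
  refine Finset.sum_nonneg fun i _ => Finset.sum_nonneg fun k _ => ?_
  rcases eq_or_ne i k with rfl | hik
  · rw [mul_left_comm, hyz, mul_zero]
  · exact mul_nonneg (hy i) (mul_nonneg (hoff i k hik) (hz k))

theorem nonpos_of_mulVec_nonneg_s1 (hneg : ∀ x : ι → ℝ, x ≠ 0 → x ⬝ᵥ M *ᵥ x < 0)
    (hoff : ∀ i j, i ≠ j → 0 ≤ M i j) (hMx : 0 ≤ M *ᵥ x) : x ≤ 0 := by
  rw [← posPart_eq_zero]
  by_contra hpos
  have hsplit : x⁺ = x + x⁻ := eq_add_of_sub_eq (posPart_sub_negPart x)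
  have hcross : 0 ≤ x⁺ ⬝ᵥ M *ᵥ x⁻ :=
    dotProduct_mulVec_nonneg_of_offDiag_nonneg hoff (posPart_nonneg x) (negPart_nonneg x)
      fun i => Real.posPart_mul_negPart (x i)
  have hform : 0 ≤ x⁺ ⬝ᵥ M *ᵥ x⁺ := by
    rw [hsplit, mulVec_add, dotProduct_add, ← hsplit]
    exact add_nonneg (dotProduct_nonneg_of_nonneg (posPart_nonneg x) hMx) hcross
  exact (hneg _ hpos).not_ge hform

theorem mulVec_apply_nonpos_of_apply_eq_zero (hoff : ∀ i j, i ≠ j → 0 ≤ M i j) (hx : x ≤ 0)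
    {i : ι} (hi : x i = 0) : (M *ᵥ x) i ≤ 0 :=
  Finset.sum_nonpos fun k _ => mul_apply_nonpos_of_apply_eq_zero hoff hx hi k

theorem apply_eq_zero_of_mulVec_apply_eq_zero (hoff : ∀ i j, i ≠ j → 0 ≤ M i j) (hx : x ≤ 0)
    {i k : ι} (hi : x i = 0) (hMx : (M *ᵥ x) i = 0) (hik : M i k ≠ 0) : x k = 0 := by
  have hterms := (Finset.sum_eq_zero_iff_of_nonpos fun k _ =>
    mul_apply_nonpos_of_apply_eq_zero hoff hx hi k).1 hMx
  exact (mul_eq_zero.1 (hterms k (Finset.mem_univ k))).resolve_left hik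

theorem apply_neg_of_mulVec_nonneg (hneg : ∀ x : ι → ℝ, x ≠ 0 → x ⬝ᵥ M *ᵥ x < 0)
    (hoff : ∀ i j, i ≠ j → 0 ≤ M i j)
    (hirr : ∀ i j : ι, i ≠ j →
      ∃ (m : ℕ) (k : Fin (m + 1) → ι), k 0 = i ∧ k (Fin.last m) = j ∧
        ∀ l : Fin m, M (k l.castSucc) (k l.succ) ≠ 0)
    (hMx : 0 ≤ M *ᵥ x) {j : ι} (hj : (M *ᵥ x) j ≠ 0) (i : ι) : x i < 0 := by
  have hx := nonpos_of_mulVec_nonneg_s1 hneg hoff hMx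
  have hrow {a : ι} (ha : x a = 0) : (M *ᵥ x) a = 0 :=
    (mulVec_apply_nonpos_of_apply_eq_zero hoff hx ha).antisymm (hMx a)
  refine (hx i).lt_of_ne fun hi => hj (hrow ?_)
  rcases eq_or_ne i j with rfl | hij
  · exact hi
  obtain ⟨m, k, rfl, rfl, hk⟩ := hirr i j hij
  exact Fin.last_of_chain (P := (x · = 0))
    (fun _ _ hab ha => apply_eq_zero_of_mulVec_apply_eq_zero hoff hx ha (hrow ha) hab) k hk hi

end Matrix

theorem inv_entries_neg_of_negdef_offdiag_nonneg_irreducible_general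
    {n : ℕ} (M : Matrix (Fin n) (Fin n) ℝ)
    (hneg : ∀ x : Fin n → ℝ, x ≠ 0 → dotProduct x (M.mulVec x) < 0)
    (hoff : ∀ i j : Fin n, i ≠ j → 0 ≤ M i j)
    (hirr : ∀ i j : Fin n, i ≠ j →
      ∃ (m : ℕ) (k : Fin (m + 1) → Fin n), k 0 = i ∧ k (Fin.last m) = j ∧
        ∀ l : Fin m, M (k l.castSucc) (k l.succ) ≠ 0) :
    ∀ i j : Fin n, M⁻¹ i j < 0 := by
  intro i j
  have hMinv : M * M⁻¹ = 1 :=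
    mul_nonsing_inv M (isUnit_iff_ne_zero.2 (det_ne_zero_of_dotProduct_mulVec_neg hneg))
  have hcol : M *ᵥ (M⁻¹ *ᵥ Pi.single j 1) = Pi.single j 1 := by
    rw [mulVec_mulVec, hMinv, one_mulVec]
  have hneg_col := apply_neg_of_mulVec_nonneg hneg hoff hirr (x := M⁻¹ *ᵥ Pi.single j 1)
    (by rw [hcol]; exact Pi.single_nonneg.2 zero_le_one) (j := j)
    (by rw [hcol, Pi.single_eq_same]; exact one_ne_zero) i
  rwa [mulVec_single_one, col_apply] at hneg_col

/-- Let `M` be an `n × n` real symmetric negative definite matrix all of whose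
off-diagonal entries are nonnegative, and assume `M` is irreducible, i.e. for every
pair of indices `i ≠ j` there is a chain of indices `i = k₀, k₁, …, k_m = j` with
`M (k l) (k (l+1)) ≠ 0` for every `l`.  Then every entry of `M⁻¹` is strictly
negative. -/
theorem inv_entries_neg_of_negdef_offdiag_nonneg_irreducible
    {n : ℕ} (M : Matrix (Fin n) (Fin n) ℝ)
    (hsymm : M.IsSymm)
    (hneg : ∀ x : Fin n → ℝ, x ≠ 0 → dotProduct x (M.mulVec x) < 0)
    (hoff : ∀ i j : Fin n, i ≠ j → 0 ≤ M i j)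
    (hirr : ∀ i j : Fin n, i ≠ j →
      ∃ (m : ℕ) (k : Fin (m + 1) → Fin n), k 0 = i ∧ k (Fin.last m) = j ∧
        ∀ l : Fin m, M (k l.castSucc) (k l.succ) ≠ 0) :
    ∀ i j : Fin n, M⁻¹ i j < 0 :=
  inv_entries_neg_of_negdef_offdiag_nonneg_irreducible_general M hneg hoff hirr
end
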